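/- Let U be a d×d unitary matrix (d ≥ 1) and X_U the d×d real matrix with entries (X_U)_{ij} = |⟨i|U|j⟩|². Then 0 ≤ Tr[ X_U X_Uᵀ ( I − X_U X_Uᵀ ) ] ≤ (d−1)/4, and the lower bound 0 is attained if and only if the dephasing superoperators commute: D_B ∘ D_{B'} = D_{B'} ∘ D_B, where D_{B'}(X) = ∑_i (U P_i U†) X (U P_i U†). -/

import Mathlib

open Matrix BigOperators

/-- The rank-one projector `|v i⟩⟨v i|`. -/
noncomputable def rankOneProj {d : ℕ} (v : Fin d → (Fin d → ℂ)) (i : Fin d) :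
    Matrix (Fin d) (Fin d) ℂ :=
  Matrix.vecMulVec (v i) (star (v i))

/-- The dephasing superoperator `D_B(X) = ∑ i, P_i X P_i`, `P_i = |v i⟩⟨v i|`. -/
noncomputable def dephase {d : ℕ} (v : Fin d → (Fin d → ℂ))
    (X : Matrix (Fin d) (Fin d) ℂ) : Matrix (Fin d) (Fin d) ℂ :=
  ∑ i, rankOneProj v i * X * rankOneProj v i

/-- The dephasing superoperator of the rotated basis `B' = {U (v i)}`. -/
noncomputable def dephaseRot {d : ℕ} (v : Fin d → (Fin d → ℂ))
    (U : Matrix (Fin d) (Fin d) ℂ) (X : Matrix (Fin d) (Fin d) ℂ) :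
    Matrix (Fin d) (Fin d) ℂ :=
  ∑ i, (U * rankOneProj v i * Uᴴ) * X * (U * rankOneProj v i * Uᴴ)

/-- The bistochastic matrix `(X_U)_{ij} = |⟨i|U|j⟩|²`. -/
noncomputable def xMat {d : ℕ} (v : Fin d → (Fin d → ℂ)) (U : Matrix (Fin d) (Fin d) ℂ) :
    Matrix (Fin d) (Fin d) ℝ :=
  Matrix.of fun i j => ‖star (v i) ⬝ᵥ (U *ᵥ v j)‖ ^ 2

/-!
Put `w j = U v j`, so that `X = xMat v U` is the overlap matrix `|⟨v i, w j⟩|²` of two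
orthonormal bases. It is doubly stochastic, hence `Y = X Xᵀ` is symmetric with `Y 1 = 1`; each row
of `Y - 1/2` then sums to `1/2`, and Cauchy–Schwarz on these rows gives the upper bound.

With `P_k`, `Q_j` the projectors onto `v k`, `w j`, one has `D_w P_k = ∑ j, X k j • Q_j` and
`D_v (D_w P_k) = ∑ i, Y k i • P_i`. As `D_v` is the Hilbert–Schmidt orthogonal projection onto
the span of the `P_i`, Pythagoras gives `Tr[Y (1 - Y)] = ∑ k, ‖D_w P_k - D_v (D_w P_k)‖²`. This is
the lower bound, and it vanishes iff `D_w` maps each `P_k` into that span, which, both dephasings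
being self-adjoint, is equivalent to `D_v D_w = D_w D_v`.
-/

open ComplexOrder

section RankOne

variable {n : Type*} [Fintype n]

lemma vecMulVec_mul_mul_vecMulVec {R : Type*} [CommSemiring R] (a b c e : n → R)
    (M : Matrix n n R) :
    vecMulVec a b * M * vecMulVec c e = (b ⬝ᵥ M *ᵥ c) • vecMulVec a e := by
  rw [Matrix.mul_assoc, mul_vecMulVec, vecMulVec_mul_vecMulVec]
  ext i j
  simp only [vecMulVec_apply, Pi.smul_apply, Matrix.smul_apply, smul_eq_mul]
  ring

lemma trace_vecMulVec_mul {R : Type*} [CommSemiring R] (a b : n → R) (M : Matrix n n R) :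
    trace (vecMulVec a b * M) = b ⬝ᵥ M *ᵥ a := by
  rw [vecMulVec_mul, trace_vecMulVec, dotProduct_comm, dotProduct_mulVec]

lemma star_dotProduct_vecMulVec_mulVec (a b : n → ℂ) :
    star a ⬝ᵥ vecMulVec b (star b) *ᵥ a = ((‖star a ⬝ᵥ b‖ ^ 2 : ℝ) : ℂ) := by
  rw [vecMulVec_mulVec, dotProduct_smul, op_smul_eq_smul, smul_eq_mul, star_dotProduct b a,
    Complex.star_def, Complex.conj_mul', Complex.ofReal_pow]

end RankOne

section Orthonormal

variable {n : Type*} [Fintype n] [DecidableEq n]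

def IsOrthonormalFamily {ι : Type*} [DecidableEq ι] (v : ι → n → ℂ) : Prop :=
  ∀ i j, star (v i) ⬝ᵥ v j = if i = j then 1 else 0

lemma IsOrthonormalFamily.mulVec {ι : Type*} [DecidableEq ι] {v : ι → n → ℂ}
    (hv : IsOrthonormalFamily v) {U : Matrix n n ℂ} (hU : Uᴴ * U = 1) :
    IsOrthonormalFamily fun i => U *ᵥ v i := by
  intro i j
  rw [star_mulVec, ← dotProduct_mulVec, mulVec_mulVec, hU, one_mulVec, hv]

lemma IsOrthonormalFamily.sum_vecMulVec {v : n → n → ℂ} (hv : IsOrthonormalFamily v) :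
    ∑ i, vecMulVec (v i) (star (v i)) = 1 := by
  set W : Matrix n n ℂ := (of v)ᵀ
  have hW : Wᴴ * W = 1 := by
    ext i j
    simpa [W, mul_apply, dotProduct, one_apply] using hv i j
  have h := mul_eq_one_comm.mp hW
  ext a b
  simpa [W, mul_apply, Matrix.sum_apply, vecMulVec_apply] using congrFun (congrFun h a) b

lemma IsOrthonormalFamily.sum_norm_sq_dotProduct {v : n → n → ℂ} (hv : IsOrthonormalFamily v)
    (a : n → ℂ) : ((∑ i, ‖star a ⬝ᵥ v i‖ ^ 2 : ℝ) : ℂ) = star a ⬝ᵥ a := by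
  push_cast
  simp_rw [← Complex.ofReal_pow, ← star_dotProduct_vecMulVec_mulVec, ← dotProduct_sum,
    ← sum_mulVec, hv.sum_vecMulVec, one_mulVec]

end Orthonormal

section Overlap

variable {ι κ n : Type*} [Fintype n]

noncomputable def overlapMat (v : ι → n → ℂ) (w : κ → n → ℂ) : Matrix ι κ ℝ :=
  of fun i j => ‖star (v i) ⬝ᵥ w j‖ ^ 2

lemma overlapMat_transpose (v : ι → n → ℂ) (w : κ → n → ℂ) :
    (overlapMat v w)ᵀ = overlapMat w v := by
  ext j i
  simp [overlapMat, star_dotProduct (v i)]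

lemma overlapMat_mem_doublyStochastic [DecidableEq n] {v w : n → n → ℂ}
    (hv : IsOrthonormalFamily v) (hw : IsOrthonormalFamily w) :
    overlapMat v w ∈ doublyStochastic ℝ n := by
  have hsum : ∀ {v w : n → n → ℂ}, IsOrthonormalFamily v → IsOrthonormalFamily w →
      ∀ i, ∑ j, overlapMat v w i j = 1 := by
    intro v w hv hw i
    have h := (hw.sum_norm_sq_dotProduct (v i)).trans (by simpa using hv i i)
    exact_mod_cast h
  refine mem_doublyStochastic_iff_sum.mpr ⟨fun i j => sq_nonneg _, hsum hv hw, fun j => ?_⟩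
  simpa [← overlapMat_transpose v w] using hsum hw hv j

end Overlap

section Dephase

variable {d : ℕ}

lemma dephase_eq_sum_smul (v : Fin d → Fin d → ℂ) (M : Matrix (Fin d) (Fin d) ℂ) :
    dephase v M = ∑ i, (star (v i) ⬝ᵥ M *ᵥ v i) • rankOneProj v i := by
  simp only [dephase, rankOneProj, vecMulVec_mul_mul_vecMulVec]

lemma dephaseRot_eq_dephase (v : Fin d → Fin d → ℂ) (U : Matrix (Fin d) (Fin d) ℂ) :
    dephaseRot v U = dephase fun i => U *ᵥ v i := by
  funext M
  simp only [dephaseRot, dephase, rankOneProj, mul_vecMulVec, vecMulVec_mul, star_mulVec]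

lemma trace_mul_dephase (v : Fin d → Fin d → ℂ) (A B : Matrix (Fin d) (Fin d) ℂ) :
    trace (A * dephase v B) = trace (dephase v A * B) := by
  simp only [dephase, Matrix.mul_sum, Matrix.sum_mul, trace_sum]
  refine Finset.sum_congr rfl fun i _ => ?_
  simp only [Matrix.mul_assoc]
  rw [trace_mul_comm (rankOneProj v i)]
  simp only [Matrix.mul_assoc]

lemma dephase_sum_smul {ι : Type*} (v : Fin d → Fin d → ℂ) (s : Finset ι) (c : ι → ℂ)
    (A : ι → Matrix (Fin d) (Fin d) ℂ) :
    dephase v (∑ k ∈ s, c k • A k) = ∑ k ∈ s, c k • dephase v (A k) := by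
  simp only [dephase, Matrix.mul_sum, Matrix.sum_mul, Matrix.mul_smul, Matrix.smul_mul,
    Finset.smul_sum]
  exact Finset.sum_comm

lemma dephase_rankOneProj (v w : Fin d → Fin d → ℂ) (k : Fin d) :
    dephase w (rankOneProj v k) = ∑ j, (overlapMat v w k j : ℂ) • rankOneProj w j := by
  simp only [dephase_eq_sum_smul, rankOneProj, star_dotProduct_vecMulVec_mulVec, overlapMat,
    of_apply, star_dotProduct (w _) (v k), norm_star]

lemma dephase_rankOneProj_self {v : Fin d → Fin d → ℂ} (hv : IsOrthonormalFamily v) (k : Fin d) :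
    dephase v (rankOneProj v k) = rankOneProj v k := by
  simp [dephase_rankOneProj, overlapMat, hv k, apply_ite (‖·‖)]

lemma dephase_dephase {v : Fin d → Fin d → ℂ} (hv : IsOrthonormalFamily v)
    (M : Matrix (Fin d) (Fin d) ℂ) : dephase v (dephase v M) = dephase v M := by
  rw [dephase_eq_sum_smul v M, dephase_sum_smul]
  simp only [dephase_rankOneProj_self hv]

lemma conjTranspose_dephase (v : Fin d → Fin d → ℂ) (M : Matrix (Fin d) (Fin d) ℂ) :
    (dephase v M)ᴴ = dephase v Mᴴ := by
  simp [dephase, rankOneProj, conjTranspose_sum, Matrix.mul_assoc]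

end Dephase

section DephaseOrthonormal

variable {d : ℕ} {v : Fin d → Fin d → ℂ}

lemma trace_conjTranspose_dephase_mul_dephase (hv : IsOrthonormalFamily v)
    (M : Matrix (Fin d) (Fin d) ℂ) :
    trace (Mᴴ * dephase v M) = trace ((dephase v M)ᴴ * dephase v M) := by
  rw [conjTranspose_dephase, ← trace_mul_dephase, dephase_dephase hv]

/-- Pythagoras for the orthogonal projection `dephase v` in the Hilbert–Schmidt inner product. -/
lemma trace_conjTranspose_sub_dephase_mul (hv : IsOrthonormalFamily v)
    (M : Matrix (Fin d) (Fin d) ℂ) :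
    trace ((M - dephase v M)ᴴ * (M - dephase v M))
      = trace (Mᴴ * M) - trace ((dephase v M)ᴴ * dephase v M) := by
  have h : trace ((dephase v M)ᴴ * M) = trace (Mᴴ * dephase v M) := by
    rw [conjTranspose_dephase, trace_mul_dephase]
  rw [conjTranspose_sub, Matrix.sub_mul, Matrix.mul_sub, Matrix.mul_sub, trace_sub, trace_sub,
    trace_sub, h, trace_conjTranspose_dephase_mul_dephase hv]
  ring

lemma trace_conjTranspose_sum_smul_rankOneProj_mul (hv : IsOrthonormalFamily v)
    (a b : Fin d → ℝ) :
    trace ((∑ i, (a i : ℂ) • rankOneProj v i)ᴴ * ∑ i, (b i : ℂ) • rankOneProj v i)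
      = ((∑ i, a i * b i : ℝ) : ℂ) := by
  have hP : ∀ i j, trace (rankOneProj v i * rankOneProj v j) = if i = j then 1 else 0 := by
    intro i j
    rw [rankOneProj, trace_vecMulVec_mul, rankOneProj, star_dotProduct_vecMulVec_mulVec, hv]
    split_ifs <;> simp
  have hPH : ∀ i, (rankOneProj v i)ᴴ = rankOneProj v i := fun i => by simp [rankOneProj]
  simp [conjTranspose_sum, hPH, Finset.sum_mul, Finset.mul_sum, trace_sum, hP, mul_comm]

lemma dephase_comm_iff (hv : IsOrthonormalFamily v) (w : Fin d → Fin d → ℂ) :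
    (∀ M, dephase v (dephase w M) = dephase w (dephase v M))
      ↔ ∀ k, dephase v (dephase w (rankOneProj v k)) = dephase w (rankOneProj v k) := by
  refine ⟨fun h k => by rw [h, dephase_rankOneProj_self hv], fun h M => ?_⟩
  have hvwv : ∀ M, dephase w (dephase v M) = dephase v (dephase w (dephase v M)) := by
    intro M
    simp only [dephase_eq_sum_smul v M, dephase_sum_smul, h]
  -- `dephase v` and `dephase w` are self-adjoint, so `hvwv` also gives `D_v D_w = D_v D_w D_v`.
  refine ext_iff_trace_mul_left.mpr fun A => ?_
  rw [trace_mul_dephase, trace_mul_dephase, hvwv, ← trace_mul_dephase, ← trace_mul_dephase,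
    ← trace_mul_dephase, ← hvwv]

end DephaseOrthonormal

section RealTrace

variable {n : Type*} [Fintype n] [DecidableEq n]

lemma trace_mul_one_sub_of_transpose_eq {Y : Matrix n n ℝ} (hY : Yᵀ = Y) :
    trace (Y * (1 - Y)) = ∑ k, (Y k k - ∑ i, Y k i ^ 2) := by
  rw [Matrix.mul_sub, Matrix.mul_one, trace_sub, trace, trace, ← Finset.sum_sub_distrib]
  refine Finset.sum_congr rfl fun k _ => ?_
  simp only [diag_apply, mul_apply, sq]
  congr 1
  exact Finset.sum_congr rfl fun i _ => by rw [← transpose_apply Y i k, hY]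

lemma trace_mul_one_sub_le_of_mulVec_one [Nonempty n] {Y : Matrix n n ℝ} (hY : Yᵀ = Y)
    (h1 : Y *ᵥ 1 = 1) : trace (Y * (1 - Y)) ≤ ((Fintype.card n : ℝ) - 1) / 4 := by
  set c : ℝ := (Fintype.card n : ℝ)
  have hc : 0 < c := by positivity
  -- Row `k` of `Y - 1/2` sums to `1/2`, so by Cauchy–Schwarz its squared norm is `≥ 1 / (4 c)`.
  have hrow : ∀ k, Y k k - ∑ i, Y k i ^ 2 ≤ 1 / 4 - 1 / (4 * c) := by
    intro k
    set A : n → ℝ := fun i => Y k i - if k = i then 1 / 2 else 0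
    have hsum : ∑ i, Y k i = 1 := by simpa [mulVec, dotProduct] using congrFun h1 k
    have hA : ∑ i, A i = 1 / 2 := by
      simp only [A, Finset.sum_sub_distrib, hsum, Finset.sum_ite_eq, Finset.mem_univ, if_true]
      norm_num
    have hA2 : ∑ i, A i ^ 2 = ∑ i, Y k i ^ 2 - Y k k + 1 / 4 := by
      simp [A, sub_sq, Finset.sum_add_distrib, Finset.sum_sub_distrib, ite_pow]
      ring
    have hcs : (∑ i, A i) ^ 2 ≤ c * ∑ i, A i ^ 2 := by
      simpa using sq_sum_le_card_mul_sum_sq (s := Finset.univ) (f := A)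
    rw [hA, hA2] at hcs
    have : 1 / (4 * c) ≤ ∑ i, Y k i ^ 2 - Y k k + 1 / 4 := by
      rw [div_le_iff₀ (by positivity)]
      linarith
    linarith
  calc trace (Y * (1 - Y)) = ∑ k, (Y k k - ∑ i, Y k i ^ 2) := trace_mul_one_sub_of_transpose_eq hY
    _ ≤ ∑ _k : n, (1 / 4 - 1 / (4 * c)) := Finset.sum_le_sum fun k _ => hrow k
    _ = (c - 1) / 4 := by
      simp only [Finset.sum_const, Finset.card_univ, nsmul_eq_mul, c]
      field_simp

end RealTrace

section TwoBases

variable {d : ℕ} {v w : Fin d → Fin d → ℂ}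

lemma dephase_dephase_rankOneProj (k : Fin d) :
    dephase v (dephase w (rankOneProj v k))
      = ∑ i, ((overlapMat v w * (overlapMat v w)ᵀ) k i : ℂ) • rankOneProj v i := by
  rw [dephase_rankOneProj, dephase_sum_smul]
  simp only [dephase_rankOneProj w v, Finset.smul_sum, smul_smul]
  rw [Finset.sum_comm]
  refine Finset.sum_congr rfl fun i _ => ?_
  rw [← Finset.sum_smul]
  simp [mul_apply, ← overlapMat_transpose v w]

theorem ofReal_trace_mul_one_sub_eq_sum (hv : IsOrthonormalFamily v)
    (hw : IsOrthonormalFamily w) :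
    ((overlapMat v w * (overlapMat v w)ᵀ * (1 - overlapMat v w * (overlapMat v w)ᵀ)).trace : ℂ)
      = ∑ k, trace ((dephase w (rankOneProj v k) - dephase v (dephase w (rankOneProj v k)))ᴴ
          * (dephase w (rankOneProj v k) - dephase v (dephase w (rankOneProj v k)))) := by
  rw [trace_mul_one_sub_of_transpose_eq (by rw [transpose_mul, transpose_transpose]),
    Complex.ofReal_sum]
  refine Finset.sum_congr rfl fun k _ => ?_
  rw [trace_conjTranspose_sub_dephase_mul hv, dephase_dephase_rankOneProj,
    dephase_rankOneProj, trace_conjTranspose_sum_smul_rankOneProj_mul hw,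
    trace_conjTranspose_sum_smul_rankOneProj_mul hv]
  simp [mul_apply, sq]

end TwoBases

/-- **Bounds on the 2-norm CGP of maximally dephasing channels.**
For a unitary `U` (with `(X_U)_{ij} = |⟨i|U|j⟩|²`),
`0 ≤ Tr[X_U X_Uᵀ (I − X_U X_Uᵀ)] ≤ (d−1)/4`, and the lower bound `0` is attained
if and only if the dephasing superoperators `D_B` and `D_{B'}` commute. -/
theorem cgp_maximal_dephasing_bounds {d : ℕ} (hd : 1 ≤ d)
    (v : Fin d → (Fin d → ℂ))
    (hv : ∀ i j, star (v i) ⬝ᵥ v j = if i = j then 1 else 0)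
    (U : Matrix (Fin d) (Fin d) ℂ) (hU : U ∈ Matrix.unitaryGroup (Fin d) ℂ) :
    (0 ≤ (xMat v U * (xMat v U)ᵀ * (1 - xMat v U * (xMat v U)ᵀ)).trace
      ∧ (xMat v U * (xMat v U)ᵀ * (1 - xMat v U * (xMat v U)ᵀ)).trace ≤ ((d : ℝ) - 1) / 4)
    ∧ ((xMat v U * (xMat v U)ᵀ * (1 - xMat v U * (xMat v U)ᵀ)).trace = 0
        ↔ ∀ X : Matrix (Fin d) (Fin d) ℂ,
            dephase v (dephaseRot v U X) = dephaseRot v U (dephase v X)) := by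
  have hw : IsOrthonormalFamily fun j => U *ᵥ v j :=
    IsOrthonormalFamily.mulVec hv (mem_unitaryGroup_iff'.mp hU)
  have hX : xMat v U = overlapMat v fun j => U *ᵥ v j := rfl
  have hsos := ofReal_trace_mul_one_sub_eq_sum hv hw
  have hnonneg : ∀ E : Matrix (Fin d) (Fin d) ℂ, 0 ≤ trace (Eᴴ * E) :=
    fun E => (posSemidef_conjTranspose_mul_self E).trace_nonneg
  rw [dephaseRot_eq_dephase, hX]
  refine ⟨⟨?_, ?_⟩, ?_⟩
  · exact Complex.zero_le_real.mp (hsos ▸ Finset.sum_nonneg fun k _ => hnonneg _)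
  · have : Nonempty (Fin d) := ⟨⟨0, hd⟩⟩
    have hY := mul_mem (overlapMat_mem_doublyStochastic hv hw)
      (transpose_mem_doublyStochastic_iff.mpr (overlapMat_mem_doublyStochastic hv hw))
    simpa using trace_mul_one_sub_le_of_mulVec_one (by rw [transpose_mul, transpose_transpose])
      (mulVec_one_of_mem_doublyStochastic hY)
  · rw [dephase_comm_iff hv, ← Complex.ofReal_eq_zero, hsos,
      Finset.sum_eq_zero_iff_of_nonneg fun k _ => hnonneg _]
    simp only [Finset.mem_univ, true_implies]
    refine forall_congr' fun k => ?_
    rw [trace_conjTranspose_mul_self_eq_zero_iff, sub_eq_zero, eq_comm]
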